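/- (Prefix family inside the ball has geometric cardinality.) Let Γ be a finite type, S a list over Γ, and k : ℕ. Then the set {P ++ S | P : List Γ, |P| ≤ k} is contained in 𝒮_k(S,Γ) = {S' : List Γ | d_lev(S, S') ≤ k}, and its cardinality equals ∑_{i=0}^{k} |Γ|^i. -/

import Mathlib

/-- Mathlib's former `Levenshtein.Cost` (removed from Mathlib), restored verbatim. -/
structure Levenshtein.Cost (α β δ : Type*) where
  delete : α → δ
  insert : β → δ
  substitute : α → β → δ

/-- Mathlib's former `Levenshtein.defaultCost`, restored verbatim. -/
def Levenshtein.defaultCost {α : Type*} [DecidableEq α] : Levenshtein.Cost α α ℕ where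
  delete _ := 1
  insert _ := 1
  substitute a b := if a = b then 0 else 1

/-- Mathlib's former `Levenshtein.impl`, restored. -/
def Levenshtein.impl {α β δ : Type*} [AddZeroClass δ] [Min δ] (C : Levenshtein.Cost α β δ)
    (xs : List α) (y : β) (d : {r : List δ // 0 < r.length}) : {r : List δ // 0 < r.length} :=
  let ⟨ds, w⟩ := d
  xs.zip (ds.zip ds.tail) |>.foldr
    (init := ⟨[C.insert y + ds.getLast (List.length_pos_iff.mp w)], by simp⟩)
    (fun ⟨x, d₀, d₁⟩ ⟨r, w⟩ =>
      ⟨min (C.delete x + r[0]) (min (C.insert y + d₀) (C.substitute x y + d₁)) :: r, by simp⟩)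

/-- Mathlib's former `suffixLevenshtein`, restored. -/
def suffixLevenshtein {α β δ : Type*} [AddZeroClass δ] [Min δ] (C : Levenshtein.Cost α β δ)
    (xs : List α) (ys : List β) : {r : List δ // 0 < r.length} :=
  ys.foldr
    (Levenshtein.impl C xs)
    (xs.foldr (init := ⟨[0], by simp⟩) (fun a ⟨r, w⟩ => ⟨(C.delete a + r[0]) :: r, by simp⟩))

/-- Mathlib's former `levenshtein`, restored. -/
def levenshtein {α β δ : Type*} [AddZeroClass δ] [Min δ] (C : Levenshtein.Cost α β δ)
    (xs : List α) (ys : List β) : δ :=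
  let ⟨r, w⟩ := suffixLevenshtein C xs ys
  r[0]

/-- The Levenshtein (edit) distance with unit costs. -/
def dlev {Γ : Type*} [DecidableEq Γ] (S S' : List Γ) : ℕ :=
  levenshtein Levenshtein.defaultCost S S'

/-!
Prepending the letters of `P` one at a time costs one insertion each, so
`d_lev(S, P ++ S) ≤ |P|`. Since `P ↦ P ++ S` is injective, the family is in bijection with the
words of length at most `k`, and there are `|Γ|^i` words of length `i`.
-/

section Levenshtein

variable {α β δ : Type*} [AddZeroClass δ] [Min δ] (C : Levenshtein.Cost α β δ)

/-- Rows of the dynamic-programming table: `(impl C xs y r).1` lists the distances from the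
suffixes of `xs` to `y :: ys`, given the row `r` of distances from those suffixes to `ys`. -/
theorem Levenshtein.impl_cons_tail (x : α) (xs : List α) (y : β)
    (A B : {r : List δ // 0 < r.length}) (h : A.1.tail = B.1) :
    (impl C (x :: xs) y A).1.tail = (impl C xs y B).1 := by
  obtain ⟨_ | ⟨d, ds⟩, hA⟩ := A
  · simp at hA
  obtain ⟨es, hB⟩ := B
  obtain rfl : ds = es := h
  obtain _ | ⟨e, es⟩ := ds
  · simp at hB
  rfl

theorem Levenshtein.impl_cons_head (x : α) (xs : List α) (y : β)
    (A B : {r : List δ // 0 < r.length}) (h : A.1.tail = B.1) :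
    (impl C (x :: xs) y A).1[0]'(impl C (x :: xs) y A).2 =
      min (C.delete x + (impl C xs y B).1[0]'(impl C xs y B).2)
        (min (C.insert y + A.1[0]'A.2) (C.substitute x y + B.1[0]'B.2)) := by
  obtain ⟨_ | ⟨d, ds⟩, hA⟩ := A
  · simp at hA
  obtain ⟨es, hB⟩ := B
  obtain rfl : ds = es := h
  obtain _ | ⟨e, es⟩ := ds
  · simp at hB
  rfl

theorem suffixLevenshtein_cons_tail (x : α) (xs : List α) (ys : List β) :
    (suffixLevenshtein C (x :: xs) ys).1.tail = (suffixLevenshtein C xs ys).1 := by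
  induction ys with
  | nil => rfl
  | cons y ys ih => exact Levenshtein.impl_cons_tail C x xs y _ _ ih

theorem levenshtein_nil_cons (y : β) (ys : List β) :
    levenshtein C ([] : List α) (y :: ys) = C.insert y + levenshtein C [] ys := by
  cases ys <;> rfl

theorem levenshtein_cons_cons (x : α) (xs : List α) (y : β) (ys : List β) :
    levenshtein C (x :: xs) (y :: ys) =
      min (C.delete x + levenshtein C xs (y :: ys))
        (min (C.insert y + levenshtein C (x :: xs) ys)
          (C.substitute x y + levenshtein C xs ys)) :=
  Levenshtein.impl_cons_head C x xs y _ _ (suffixLevenshtein_cons_tail C x xs ys)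

end Levenshtein

section dlev

variable {Γ : Type*} [DecidableEq Γ]

@[simp] theorem dlev_self (S : List Γ) : dlev S S = 0 := by
  induction S with
  | nil => rfl
  | cons x xs ih =>
    refine Nat.eq_zero_of_le_zero ?_
    rw [dlev, levenshtein_cons_cons]
    refine (min_le_right _ _).trans ((min_le_right _ _).trans ?_)
    change (if x = x then 0 else 1) + dlev xs xs ≤ 0
    simp [ih]

theorem dlev_cons_right_le (S T : List Γ) (a : Γ) : dlev S (a :: T) ≤ dlev S T + 1 := by
  cases S with
  | nil =>
    rw [dlev, levenshtein_nil_cons]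
    exact (add_comm _ _).le
  | cons x xs =>
    rw [dlev, levenshtein_cons_cons]
    exact (min_le_right _ _).trans ((min_le_left _ _).trans (add_comm _ _).le)

theorem dlev_append_left_le (S P : List Γ) : dlev S (P ++ S) ≤ P.length := by
  induction P with
  | nil => simp
  | cons a P ih => exact (dlev_cons_right_le S (P ++ S) a).trans (Nat.succ_le_succ ih)

end dlev

section

variable {α : Type*} [Fintype α]

theorem List.ncard_setOf_length_eq (n : ℕ) :
    {l : List α | l.length = n}.ncard = Fintype.card α ^ n := by
  rw [← Nat.card_coe_set_eq, ← card_vector n, ← Nat.card_eq_fintype_card]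
  rfl -- `List.Vector α n` is by definition the subtype `{l : List α // l.length = n}`

theorem List.ncard_setOf_length_le (n : ℕ) :
    {l : List α | l.length ≤ n}.ncard = ∑ i ∈ Finset.range (n + 1), Fintype.card α ^ i := by
  induction n with
  | zero => simp
  | succ n ih =>
    have hsplit : {l : List α | l.length ≤ n + 1} =
        {l : List α | l.length ≤ n} ∪ {l : List α | l.length = n + 1} := by
      ext l; simp only [Set.mem_union, Set.mem_ofPred_eq]; omega
    rw [hsplit, Set.ncard_union_eq (Set.disjoint_left.2 fun l h₁ h₂ => by simp_all)
      (finite_length_le α n) (finite_length_eq α _), ih, ncard_setOf_length_eq,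
      Finset.sum_range_succ _ (n + 1)]

end

/-- The family of prefix-extensions `P ++ S` with `|P| ≤ k` is contained in the
Levenshtein ball of radius `k` around `S`, and its cardinality equals
`∑_{i=0}^{k} |Γ|^i`. -/
theorem prefix_family_subset_and_ncard {Γ : Type*} [DecidableEq Γ] [Fintype Γ]
    (S : List Γ) (k : ℕ) :
    {T : List Γ | ∃ P : List Γ, P.length ≤ k ∧ T = P ++ S} ⊆
        {S' : List Γ | dlev S S' ≤ k} ∧
      Set.ncard {T : List Γ | ∃ P : List Γ, P.length ≤ k ∧ T = P ++ S} =
        ∑ i ∈ Finset.range (k + 1), (Fintype.card Γ) ^ i := by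
  have hfamily : {T : List Γ | ∃ P : List Γ, P.length ≤ k ∧ T = P ++ S} =
      (· ++ S) '' {P | P.length ≤ k} := by
    ext T; simp [eq_comm]
  refine ⟨?_, ?_⟩
  · rintro T ⟨P, hP, rfl⟩
    exact (dlev_append_left_le S P).trans hP
  · rw [hfamily, Set.ncard_image_of_injective _ (List.append_left_injective S),
      List.ncard_setOf_length_le]
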